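/- arXiv:1710.08998 — 2 statements merged into one kernel-verified Lean document; each statement's English description precedes it below -/
import Mathlib

section
/- Let E be a finite-dimensional vector space over ℚ, let Δ be a finite subset of E with 0 ∉ Δ and Δ ∩ (−Δ) = ∅, set ρ₁ = (1/2)·Σ_{α∈Δ} α, and let Γ denote the set of all sums of subsets of Δ. Let w be a linear automorphism of E such that w(Δ ∪ (−Δ)) = Δ ∪ (−Δ). Then for every γ ∈ Γ one has ρ₁ − w(ρ₁ − γ) ∈ Γ; moreover, writing w ∗ γ = ρ₁ − w(ρ₁ − γ), for any two such linear automorphisms v, w one has (v∘w) ∗ γ = v ∗ (w ∗ γ), so that ∗ defines an action on Γ of the group of linear automorphisms of E preserving Δ ∪ (−Δ). -/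
open scoped BigOperators

/-- Let `Δ` be a finite subset of a finite-dimensional `ℚ`-vector space `E` with `0 ∉ Δ` and
`Δ ∩ (−Δ) = ∅`, let `ρ₁` be half the sum of the elements of `Δ`, and let `Γ` be the set of all
sums of subsets of `Δ`.  If `w` (and `v`) are linear automorphisms of `E` preserving
`Δ ∪ (−Δ)`, then `w ∗ γ := ρ₁ − w(ρ₁ − γ)` lies in `Γ` for every `γ ∈ Γ`, and
`(v ∘ w) ∗ γ = v ∗ (w ∗ γ)`, so `∗` is an action on `Γ`. -/
theorem star_action_on_sums_of_roots
    {E : Type*} [AddCommGroup E] [Module ℚ E] [FiniteDimensional ℚ E]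
    (Δ : Finset E) (hΔ0 : (0 : E) ∉ Δ) (hΔ : (↑Δ : Set E) ∩ (-(↑Δ : Set E)) = ∅)
    (ρ₁ : E) (hρ₁ : ρ₁ = (1 / 2 : ℚ) • ∑ α ∈ Δ, α)
    (Γ : Set E) (hΓ : Γ = {γ : E | ∃ S : Finset E, S ⊆ Δ ∧ γ = ∑ α ∈ S, α})
    (w v : E ≃ₗ[ℚ] E)
    (hw : w '' ((↑Δ : Set E) ∪ (-(↑Δ : Set E))) = (↑Δ : Set E) ∪ (-(↑Δ : Set E)))
    (hv : v '' ((↑Δ : Set E) ∪ (-(↑Δ : Set E))) = (↑Δ : Set E) ∪ (-(↑Δ : Set E))) :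
    (∀ γ ∈ Γ, ρ₁ - w (ρ₁ - γ) ∈ Γ) ∧
      (∀ γ ∈ Γ, ρ₁ - (w.trans v) (ρ₁ - γ) = ρ₁ - v (ρ₁ - (ρ₁ - w (ρ₁ - γ)))) := by
  classical
  constructor
  · intro γ hγ
    rw [hΓ] at hγ ⊢
    obtain ⟨S, hS, rfl⟩ := hγ
    have hdisj : ∀ x ∈ Δ, -x ∉ Δ := by
      intro x hx hnx
      have : x ∈ (↑Δ : Set E) ∩ (-(↑Δ : Set E)) := ⟨hx, by simpa using hnx⟩
      rw [hΔ] at this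
      exact this
    have hwmem : ∀ x, (x ∈ Δ ∨ -x ∈ Δ) → (w x ∈ Δ ∨ -(w x) ∈ Δ) := by
      intro x hx
      have hxU : x ∈ (↑Δ : Set E) ∪ (-(↑Δ : Set E)) := by
        rcases hx with h | h
        · exact Or.inl h
        · exact Or.inr (by simpa using h)
      have : w x ∈ (↑Δ : Set E) ∪ (-(↑Δ : Set E)) := by
        rw [← hw]; exact ⟨x, hxU, rfl⟩
      rcases this with h | h
      · exact Or.inl h
      · exact Or.inr (by simpa using h)
    have hwsymmU : w.symm '' ((↑Δ : Set E) ∪ (-(↑Δ : Set E)))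
        = (↑Δ : Set E) ∪ (-(↑Δ : Set E)) := by
      conv_lhs => rw [← hw]
      ext x
      constructor
      · rintro ⟨y, ⟨z, hz, rfl⟩, rfl⟩
        simpa [w.symm_apply_apply] using hz
      · intro hx
        exact ⟨w x, ⟨x, hx, rfl⟩, w.symm_apply_apply x⟩
    have hwsymmem : ∀ x, (x ∈ Δ ∨ -x ∈ Δ) → (w.symm x ∈ Δ ∨ -(w.symm x) ∈ Δ) := by
      intro x hx
      have hxU : x ∈ (↑Δ : Set E) ∪ (-(↑Δ : Set E)) := by
        rcases hx with h | h
        · exact Or.inl h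
        · exact Or.inr (by simpa using h)
      have : w.symm x ∈ (↑Δ : Set E) ∪ (-(↑Δ : Set E)) := by
        rw [← hwsymmU]; exact ⟨x, hxU, rfl⟩
      rcases this with h | h
      · exact Or.inl h
      · exact Or.inr (by simpa using h)
    -- coefficient function for ρ₁ - γ
    set c : E → ℚ := fun α => if α ∈ S then -(1/2 : ℚ) else (1/2 : ℚ) with hc
    have hdecomp : ρ₁ - ∑ α ∈ S, α = ∑ α ∈ Δ, c α • α := by
      have h2 : ∑ α ∈ S, α = ∑ α ∈ Δ, (if α ∈ S then α else 0) := by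
        rw [Finset.sum_ite_mem, Finset.inter_eq_right.mpr hS]
      rw [hρ₁, Finset.smul_sum, h2, ← Finset.sum_sub_distrib]
      refine Finset.sum_congr rfl fun α hα => ?_
      by_cases h : α ∈ S <;> simp [hc, h, sub_smul, neg_smul]
      · module
    -- sign and reindexing functions
    set η : E → ℚ := fun β => if w.symm β ∈ Δ then 1 else -1 with hη
    set a : E → E := fun β => if w.symm β ∈ Δ then w.symm β else -(w.symm β) with ha
    set b : E → E := fun α => if w α ∈ Δ then w α else -(w α) with hb
    have ha_mem : ∀ β ∈ Δ, a β ∈ Δ := by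
      intro β hβ
      by_cases h : w.symm β ∈ Δ
      · simpa [ha, h] using h
      · rcases hwsymmem β (Or.inl hβ) with h' | h'
        · exact absurd h' h
        · simpa [ha, h] using h'
    have hb_mem : ∀ α ∈ Δ, b α ∈ Δ := by
      intro α hα
      by_cases h : w α ∈ Δ
      · simpa [hb, h] using h
      · rcases hwmem α (Or.inl hα) with h' | h'
        · exact absurd h' h
        · simpa [hb, h] using h'
    have hwa : ∀ β, w (a β) = η β • β := by
      intro β
      by_cases h : w.symm β ∈ Δ
      · simp [ha, hη, h, w.apply_symm_apply]
      · simp [ha, hη, h, map_neg, w.apply_symm_apply]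
    have hab : ∀ α ∈ Δ, a (b α) = α := by
      intro α hα
      by_cases h : w α ∈ Δ
      · simp [hb, ha, h, w.symm_apply_apply, hα]
      · simp [hb, ha, h, map_neg, w.symm_apply_apply, hdisj α hα]
    have hba : ∀ β ∈ Δ, b (a β) = β := by
      intro β hβ
      by_cases h : w.symm β ∈ Δ
      · simp [ha, hb, h, w.apply_symm_apply, hβ]
      · simp [ha, hb, h, map_neg, w.apply_symm_apply, hdisj β hβ]
    have key : w (ρ₁ - ∑ α ∈ S, α) = ∑ β ∈ Δ, (c (a β) * η β) • β := by
      rw [hdecomp, map_sum]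
      simp only [map_smul]
      refine Finset.sum_nbij' b a hb_mem ha_mem hab hba ?_
      intro α hα
      have h1 : w α = η (b α) • b α := by
        have := hwa (b α)
        rwa [hab α hα] at this
      rw [h1, hab α hα, smul_smul]
    have hcval : ∀ α, c α = 1/2 ∨ c α = -(1/2) := by
      intro α
      by_cases h : α ∈ S <;> simp [hc, h]
    have hηval : ∀ β, η β = 1 ∨ η β = -1 := by
      intro β
      by_cases h : w.symm β ∈ Δ <;> simp [hη, h]
    have hcoef : ∀ β, c (a β) * η β = 1/2 ∨ c (a β) * η β = -(1/2) := by
      intro β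
      rcases hcval (a β) with h1 | h1 <;> rcases hηval β with h2 | h2 <;>
        simp [h1, h2]
    refine ⟨Δ.filter (fun β => c (a β) * η β = -(1/2)), Finset.filter_subset _ _, ?_⟩
    rw [key, hρ₁, Finset.smul_sum, ← Finset.sum_sub_distrib, Finset.sum_filter]
    refine Finset.sum_congr rfl fun β hβ => ?_
    rcases hcoef β with h | h <;> rw [h] <;> norm_num <;> module
  · intro γ hγ
    simp [sub_sub_cancel, LinearEquiv.trans_apply]
end

section
/- Let E be a finite-dimensional vector space over ℚ, let Δ be a finite subset of E with 0 ∉ Δ and Δ ∩ (−Δ) = ∅, set ρ₁ = (1/2)·Σ_{α∈Δ} α, and work in the group algebra ℤ[E] with basis elements e^μ for μ ∈ E. For a subset Z ⊆ Δ define integers K_Z(γ) for γ ∈ E by the expansion ∏_{α∈Δ∖Z} (1 + e^{−α}) = Σ_{γ∈E} K_Z(γ) e^{−γ}. Let w be a linear automorphism of E with w(Δ ∪ (−Δ)) = Δ ∪ (−Δ), let Z ⊆ Δ be such that w(Z) ⊆ Δ, and set w ∗ γ = ρ₁ − w(ρ₁ − γ). Then Σ_{γ∈E} K_Z(γ) e^{−(w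 ∗ γ)} = Σ_{γ∈E} K_{wZ}(γ) e^{−γ} in ℤ[E]. -/
/-!
Write `1 + e^{-α} = e^{-α/2} (e^{α/2} + e^{-α/2})`. As `ρ₁` is half the sum of `Δ`, this gives
`e^{ρ₁} ∏_{α ∈ Δ∖Z} (1 + e^{-α}) = e^{ΣZ/2} ∏_{α ∈ Δ∖Z} (e^{α/2} + e^{-α/2})`, while the left side
of the theorem is `e^{-ρ₁} · w(e^{ρ₁} ∏_{α ∈ Δ∖Z} (1 + e^{-α}))`. Now `w` sends `e^{ΣZ/2}` to
`e^{Σ(wZ)/2}`, the factors `e^{α/2} + e^{-α/2}` are even in `α`, and up to signs `w` maps `Δ ∖ Z`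
bijectively onto `Δ ∖ wZ`; so `w` turns the expression for `Z` into the one for `wZ`.
-/

open AddMonoidAlgebra

section SignRepresentative

variable {E : Type*} [AddCommGroup E] {Δ : Finset E}
variable {F : Type*} [EquivLike F E E] {w : F}

lemma apply_mem_or_neg_mem_iff
    (hw : w '' ((Δ : Set E) ∪ -(Δ : Set E)) = (Δ : Set E) ∪ -(Δ : Set E)) (x : E) :
    (w x ∈ Δ ∨ -w x ∈ Δ) ↔ (x ∈ Δ ∨ -x ∈ Δ) := by
  have := congrArg (w x ∈ ·) hw
  simpa [(EquivLike.injective w).mem_set_image] using this.symm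

variable [AddEquivClass F E E] [DecidableEq E]

def posRep (Δ : Finset E) (x : E) : E := if x ∈ Δ then x else -x

lemma posRep_eq_or_eq_neg (x : E) : posRep Δ x = x ∨ posRep Δ x = -x := by
  unfold posRep; split_ifs <;> simp

lemma posRep_of_mem {x : E} (hx : x ∈ Δ) : posRep Δ x = x := by
  rw [posRep, if_pos hx]

lemma posRep_neg_of_neg_notMem {x : E} (hnx : -x ∉ Δ) : posRep Δ (-x) = x := by
  rw [posRep, if_neg hnx, neg_neg]

lemma posRep_mem {x : E} (hx : x ∈ Δ ∨ -x ∈ Δ) : posRep Δ x ∈ Δ := by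
  unfold posRep; split_ifs with h
  · exact h
  · exact hx.resolve_left h

lemma apply_posRep {M : Type*} {f : E → M} (hf : ∀ x, f (-x) = f x) (x : E) :
    f (posRep Δ x) = f x := by
  rcases posRep_eq_or_eq_neg (Δ := Δ) x with h | h <;> rw [h]
  exact hf x

-- The bijection `Δ \ Z → Δ \ wZ` is `α ↦ ±wα`, the sign chosen so as to land in `Δ`.
theorem prod_sdiff_apply_eq_prod_sdiff_image {M : Type*} [CommMonoid M] {f : E → M}
    (hf : ∀ x, f (-x) = f x) (hΔ : ∀ α ∈ Δ, -α ∉ Δ)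
    (hw : w '' ((Δ : Set E) ∪ -(Δ : Set E)) = (Δ : Set E) ∪ -(Δ : Set E))
    {Z : Finset E} (hZ : Z ⊆ Δ) (hwZ : Z.image w ⊆ Δ) :
    ∏ α ∈ Δ \ Z, f (w α) = ∏ β ∈ Δ \ Z.image w, f β := by
  have eq_or_eq_neg {x y : E} (h : posRep Δ (w x) = posRep Δ (w y)) : x = y ∨ x = -y := by
    rcases posRep_eq_or_eq_neg (Δ := Δ) (w x) with hx | hx <;>
      rcases posRep_eq_or_eq_neg (Δ := Δ) (w y) with hy | hy <;>
      rw [hx, hy] at h <;>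
      simp only [← map_neg w, EmbeddingLike.apply_eq_iff_eq, neg_inj] at h <;> subst h <;> simp
  refine Finset.prod_nbij (fun α => posRep Δ (w α)) ?maps ?inj ?surj
    (fun α _ => (apply_posRep hf _).symm)
  case maps =>
    intro α hα
    obtain ⟨hαΔ, hαZ⟩ := Finset.mem_sdiff.1 hα
    refine Finset.mem_sdiff.2 ⟨posRep_mem ((apply_mem_or_neg_mem_iff hw α).2 (.inl hαΔ)), ?_⟩
    rintro hmem
    obtain ⟨z, hz, hzα⟩ := Finset.mem_image.1 hmem
    rw [← posRep_of_mem (hwZ (Finset.mem_image_of_mem w hz))] at hzα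
    rcases eq_or_eq_neg hzα with rfl | rfl
    · exact hαZ hz
    · exact hΔ _ hαΔ (hZ hz)
  case inj =>
    intro α hα α' hα' h
    rcases eq_or_eq_neg h with h | rfl
    · exact h
    · exact absurd (Finset.mem_sdiff.1 hα).1 (hΔ _ (Finset.mem_sdiff.1 hα').1)
  case surj =>
    intro β hβ
    obtain ⟨x, rfl⟩ := EquivLike.surjective w β
    obtain ⟨hxΔ, hxZ⟩ := Finset.mem_sdiff.1 (Finset.mem_coe.1 hβ)
    rcases (apply_mem_or_neg_mem_iff hw x).1 (.inl hxΔ) with h | h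
    · refine ⟨x, Finset.mem_sdiff.2 ⟨h, fun hx => hxZ (Finset.mem_image_of_mem w hx)⟩, ?_⟩
      simp [posRep_of_mem hxΔ]
    · refine ⟨-x, Finset.mem_sdiff.2 ⟨h, fun hx => hΔ _ hxΔ ?_⟩, ?_⟩
      · simpa using hwZ (Finset.mem_image_of_mem w hx)
      · simp [posRep_neg_of_neg_notMem (hΔ _ hxΔ)]

end SignRepresentative

section HalfShift

variable (k : Type*) [CommSemiring k] {E : Type*} [AddCommGroup E] [Module ℚ E]

noncomputable def symmFactor (α : E) : k[E] :=
  single ((1 / 2 : ℚ) • α) 1 + single (-((1 / 2 : ℚ) • α)) 1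

variable {k}

lemma symmFactor_neg (α : E) : symmFactor k (-α) = symmFactor k α := by
  rw [symmFactor, symmFactor, smul_neg, neg_neg, add_comm]

lemma domCongr_symmFactor (w : E ≃ₗ[ℚ] E) (α : E) :
    domCongr k k w.toAddEquiv (symmFactor k α) = symmFactor k (w α) := by
  simp [symmFactor, domCongr_single]

lemma one_add_single_neg_eq (α : E) :
    1 + single (-α) (1 : k) = single (-((1 / 2 : ℚ) • α)) 1 * symmFactor k α := by
  have half : (1 / 2 : ℚ) • α + (1 / 2 : ℚ) • α = α := by
    rw [← add_smul]; norm_num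
  rw [symmFactor, mul_add, single_mul_single, single_mul_single, neg_add_cancel, mul_one,
    ← one_def, ← neg_add, half]

lemma prod_one_add_single_neg (s : Finset E) :
    ∏ α ∈ s, (1 + single (-α) (1 : k)) =
      single (-((1 / 2 : ℚ) • ∑ α ∈ s, α)) 1 * ∏ α ∈ s, symmFactor k α := by
  simp only [one_add_single_neg_eq, Finset.prod_mul_distrib, prod_single, Finset.prod_const_one,
    Finset.sum_neg_distrib, Finset.smul_sum]

variable [DecidableEq E]

lemma single_halfSum_mul_prod_sdiff {Δ Z : Finset E} (hZ : Z ⊆ Δ) :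
    single ((1 / 2 : ℚ) • ∑ α ∈ Δ, α) 1 * ∏ α ∈ Δ \ Z, (1 + single (-α) (1 : k)) =
      single ((1 / 2 : ℚ) • ∑ α ∈ Z, α) 1 * ∏ α ∈ Δ \ Z, symmFactor k α := by
  rw [prod_one_add_single_neg, ← mul_assoc, single_mul_single, mul_one,
    Finset.sum_sdiff_eq_sub hZ, smul_sub]
  congr 3
  abel

end HalfShift

section DotAction

variable {k : Type*} [CommSemiring k] {E : Type*} [AddCommGroup E]

lemma finsuppSum_single_neg_dot (K : E →₀ k) (w : E ≃+ E) (ρ : E) :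
    (K.sum fun γ c => single (-(ρ - w (ρ - γ))) c) =
      single (-ρ) 1 * domCongr k k w (single ρ 1 * K.sum fun γ c => single (-γ) c) := by
  simp only [Finsupp.mul_sum, map_finsuppSum, single_mul_single, domCongr_single, one_mul]
  refine Finsupp.sum_congr fun γ _ => ?_
  rw [neg_sub, sub_eq_neg_add, sub_eq_add_neg]

end DotAction

section Invariance

variable {k : Type*} [CommSemiring k] {E : Type*} [AddCommGroup E] [Module ℚ E] [DecidableEq E]

theorem domCongr_single_halfSum_mul_prod_sdiff {Δ : Finset E} (hΔ : ∀ α ∈ Δ, -α ∉ Δ)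
    {w : E ≃ₗ[ℚ] E}
    (hw : w '' ((Δ : Set E) ∪ -(Δ : Set E)) = (Δ : Set E) ∪ -(Δ : Set E))
    {Z : Finset E} (hZ : Z ⊆ Δ) (hwZ : Z.image w ⊆ Δ) :
    domCongr k k w.toAddEquiv
        (single ((1 / 2 : ℚ) • ∑ α ∈ Δ, α) 1 * ∏ α ∈ Δ \ Z, (1 + single (-α) (1 : k))) =
      single ((1 / 2 : ℚ) • ∑ α ∈ Δ, α) 1 * ∏ α ∈ Δ \ Z.image w, (1 + single (-α) (1 : k)) := by
  rw [single_halfSum_mul_prod_sdiff hZ, single_halfSum_mul_prod_sdiff hwZ, map_mul,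
    domCongr_single, map_prod]
  simp only [domCongr_symmFactor]
  rw [prod_sdiff_apply_eq_prod_sdiff_image (f := symmFactor k) symmFactor_neg hΔ hw hZ hwZ,
    Finset.sum_image (fun _ _ _ _ h => w.injective h)]
  change single (w _) 1 * _ = _
  rw [map_smul, map_sum]

end Invariance

theorem sum_K_exp_neg_star_eq_general
    {E : Type*} [AddCommGroup E] [Module ℚ E] [DecidableEq E]
    (Δ : Finset E) (hΔ : (↑Δ : Set E) ∩ (-(↑Δ : Set E)) = ∅)
    (ρ₁ : E) (hρ₁ : ρ₁ = (1 / 2 : ℚ) • ∑ α ∈ Δ, α)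
    (w : E ≃ₗ[ℚ] E)
    (hw : w '' ((↑Δ : Set E) ∪ (-(↑Δ : Set E))) = (↑Δ : Set E) ∪ (-(↑Δ : Set E)))
    (Z : Finset E) (hZ : Z ⊆ Δ) (hwZ : Z.image w ⊆ Δ)
    (KZ KwZ : E →₀ ℤ)
    (hKZ : (∏ α ∈ Δ \ Z, (1 + AddMonoidAlgebra.single (-α) (1 : ℤ))) =
      KZ.sum fun γ c => AddMonoidAlgebra.single (-γ) c)
    (hKwZ : (∏ α ∈ Δ \ Z.image w, (1 + AddMonoidAlgebra.single (-α) (1 : ℤ))) =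
      KwZ.sum fun γ c => AddMonoidAlgebra.single (-γ) c) :
    (KZ.sum fun γ c => AddMonoidAlgebra.single (-(ρ₁ - w (ρ₁ - γ))) c) =
      KwZ.sum fun γ c => AddMonoidAlgebra.single (-γ) c := by
  have hΔ' : ∀ α ∈ Δ, -α ∉ Δ := fun α hα hnα =>
    (Set.eq_empty_iff_forall_notMem.1 hΔ) α ⟨hα, hnα⟩
  calc (KZ.sum fun γ c => single (-(ρ₁ - w (ρ₁ - γ))) c)
      = single (-ρ₁) 1 * domCongr ℤ ℤ w.toAddEquiv
          (single ρ₁ 1 * ∏ α ∈ Δ \ Z, (1 + single (-α) (1 : ℤ))) := by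
        rw [hKZ]; exact finsuppSum_single_neg_dot KZ w.toAddEquiv ρ₁
    _ = single (-ρ₁) 1 * (single ρ₁ 1 * ∏ α ∈ Δ \ Z.image w, (1 + single (-α) (1 : ℤ))) := by
        rw [hρ₁, domCongr_single_halfSum_mul_prod_sdiff hΔ' hw hZ hwZ]
    _ = KwZ.sum fun γ c => single (-γ) c := by
        rw [← mul_assoc, single_mul_single, neg_add_cancel, mul_one, ← one_def, one_mul, hKwZ]

/-- Let `Δ` be a finite subset of a finite-dimensional `ℚ`-vector space `E` with `0 ∉ Δ` and
`Δ ∩ (−Δ) = ∅`, let `ρ₁` be half the sum of the elements of `Δ`, and for `Z ⊆ Δ` let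
`K_Z : E → ℤ` (finitely supported) be defined by the expansion
`∏_{α ∈ Δ∖Z} (1 + e^{−α}) = Σ_γ K_Z(γ) e^{−γ}` in the group algebra `ℤ[E]`.  If `w` is a
linear automorphism of `E` preserving `Δ ∪ (−Δ)` and `w(Z) ⊆ Δ`, then, with
`w ∗ γ = ρ₁ − w(ρ₁ − γ)`, one has `Σ_γ K_Z(γ) e^{−(w∗γ)} = Σ_γ K_{wZ}(γ) e^{−γ}`. -/
theorem sum_K_exp_neg_star_eq
    {E : Type*} [AddCommGroup E] [Module ℚ E] [FiniteDimensional ℚ E] [DecidableEq E]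
    (Δ : Finset E) (hΔ0 : (0 : E) ∉ Δ) (hΔ : (↑Δ : Set E) ∩ (-(↑Δ : Set E)) = ∅)
    (ρ₁ : E) (hρ₁ : ρ₁ = (1 / 2 : ℚ) • ∑ α ∈ Δ, α)
    (w : E ≃ₗ[ℚ] E)
    (hw : w '' ((↑Δ : Set E) ∪ (-(↑Δ : Set E))) = (↑Δ : Set E) ∪ (-(↑Δ : Set E)))
    (Z : Finset E) (hZ : Z ⊆ Δ) (hwZ : Z.image w ⊆ Δ)
    (KZ KwZ : E →₀ ℤ)
    (hKZ : (∏ α ∈ Δ \ Z, (1 + AddMonoidAlgebra.single (-α) (1 : ℤ))) =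
      KZ.sum fun γ c => AddMonoidAlgebra.single (-γ) c)
    (hKwZ : (∏ α ∈ Δ \ Z.image w, (1 + AddMonoidAlgebra.single (-α) (1 : ℤ))) =
      KwZ.sum fun γ c => AddMonoidAlgebra.single (-γ) c) :
    (KZ.sum fun γ c => AddMonoidAlgebra.single (-(ρ₁ - w (ρ₁ - γ))) c) =
      KwZ.sum fun γ c => AddMonoidAlgebra.single (-γ) c :=
  sum_K_exp_neg_star_eq_general Δ hΔ ρ₁ hρ₁ w hw Z hZ hwZ KZ KwZ hKZ hKwZ
end
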